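/- arXiv:2509.24617 — 4 statements merged into one kernel-verified Lean document; each statement's English description precedes it below -/
import Mathlib

section
/- Let n, m be integers with n ≥ 1 and let ζ = e^{2πi/n}. Let F₂ be the free group on two generators a, b and c = aba⁻¹b⁻¹. If there exists an irreducible unitary representation ρ : F₂ → U(n) with ρ(c) = ζ^m · I, then n and m are coprime. -/
/-- A family of matrices acts irreducibly on `ℂⁿ` if the only submodules of `ℂⁿ`
invariant under all members of the family are `⊥` and `⊤`. -/
def MatIrreducible {n : ℕ} {ι : Type*} (M : ι → Matrix (Fin n) (Fin n) ℂ) : Prop :=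
  ∀ W : Submodule ℂ (Fin n → ℂ),
    (∀ i, ∀ v ∈ W, (M i).mulVec v ∈ W) → W = ⊥ ∨ W = ⊤

/-!
Write `A`, `B` for the images of `a`, `b`, so that `A B = ζ^m B A`. For `d = gcd(n, m)` and
`k = n / d` we have `ζ^(m k) = 1`, so `B^k` commutes with `A` and `B` and is a scalar by Schur's
lemma. If `v` is an eigenvector of `A`, the span of `v, B v, …, B^(k-1) v` is then invariant under
`A` and `B`, hence is all of `ℂⁿ`; thus `n ≤ n / d`, i.e. `d = 1`.
-/

section

open Matrix Module.End

theorem Matrix.mulVec_mem_of_mul_eq_one {K ι : Type*} [Field K] [Fintype ι] [DecidableEq ι]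
    {M N : Matrix ι ι K} (hMN : M * N = 1) {W : Submodule K (ι → K)}
    (hW : ∀ v ∈ W, M *ᵥ v ∈ W) : ∀ v ∈ W, N *ᵥ v ∈ W := by
  have hNM : N * M = 1 := mul_eq_one_comm.mp hMN
  let f : W →ₗ[K] W := (toLin' M).restrict hW
  have hNf : ∀ w : W, N *ᵥ (f w : ι → K) = w := fun w => by
    show N *ᵥ (M *ᵥ (w : ι → K)) = w
    rw [mulVec_mulVec, hNM, one_mulVec]
  have hf : Function.Surjective f := LinearMap.injective_iff_surjective.mp fun x y hxy =>
    Subtype.ext (by rw [← hNf x, ← hNf y, hxy])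
  intro v hv
  obtain ⟨w, hw⟩ := hf ⟨v, hv⟩
  have hv' : v = M *ᵥ w := (congrArg Subtype.val hw).symm
  rw [hv', mulVec_mulVec, hNM, one_mulVec]
  exact w.2

theorem MatIrreducible.of_closure_range_eq_top {n : ℕ} {G ι : Type*} [Group G]
    {ρ : G →* Matrix (Fin n) (Fin n) ℂ} (hρ : MatIrreducible fun g => ρ g) {f : ι → G}
    (hf : Subgroup.closure (Set.range f) = ⊤) : MatIrreducible fun i => ρ (f i) := by
  intro W hW
  refine hρ W fun g => ?_
  have hg : g ∈ Subgroup.closure (Set.range f) := hf ▸ Subgroup.mem_top g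
  induction hg using Subgroup.closure_induction with
  | mem _ hx => obtain ⟨i, rfl⟩ := hx; exact hW i
  | one => simp
  | mul x y _ _ hx hy =>
    intro v hv
    simp only [map_mul, ← mulVec_mulVec]
    exact hx _ (hy v hv)
  | inv x _ hx =>
    exact mulVec_mem_of_mul_eq_one (by rw [← map_mul, mul_inv_cancel, map_one]) hx

theorem MatIrreducible.exists_eq_smul_one {n : ℕ} {ι : Type*} {M : ι → Matrix (Fin n) (Fin n) ℂ}
    (hM : MatIrreducible M) {X : Matrix (Fin n) (Fin n) ℂ} (hX : ∀ i, Commute X (M i)) :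
    ∃ μ : ℂ, X = μ • 1 := by
  rcases isEmpty_or_nonempty (Fin n) with _ | _
  · exact ⟨0, Subsingleton.elim _ _⟩
  obtain ⟨μ, hμ⟩ := exists_eigenvalue (toLin' X)
  have hinv : ∀ i, ∀ v ∈ eigenspace (toLin' X) μ, M i *ᵥ v ∈ eigenspace (toLin' X) μ :=
    fun i _ hv => mapsTo_genEigenspace_of_comm ((hX i).map toLinAlgEquiv') μ 1 hv
  refine ⟨μ, toLin'.injective (LinearMap.ext fun v => ?_)⟩
  have hv : v ∈ eigenspace (toLin' X) μ := by
    rcases hM _ hinv with h | h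
    · exact absurd h hμ
    · exact h ▸ Submodule.mem_top
  simpa using mem_eigenspace_iff.mp hv

theorem MonoidHom.map_mul_eq_smul_map_mul_of_map_commutator {G R K : Type*} [Group G] [Monoid R]
    [SMul K R] [IsScalarTower K R R] (ρ : G →* R) {a b : G} {z : K}
    (h : ρ (a * b * a⁻¹ * b⁻¹) = z • 1) : ρ a * ρ b = z • (ρ b * ρ a) := by
  have hab : a * b = a * b * a⁻¹ * b⁻¹ * (b * a) := by group
  rw [← map_mul, hab, map_mul, h, smul_mul_assoc, one_mul, map_mul]

theorem mul_pow_eq_smul_pow_mul {R K : Type*} [Monoid R] [Monoid K] [MulAction K R]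
    [IsScalarTower K R R] [SMulCommClass K R R] {a b : R} {c : K}
    (h : a * b = c • (b * a)) (i : ℕ) : a * b ^ i = c ^ i • (b ^ i * a) := by
  induction i with
  | zero => simp
  | succ i ih =>
    calc a * b ^ (i + 1) = c ^ i • (b ^ i * (a * b)) := by
          rw [pow_succ, ← mul_assoc, ih, smul_mul_assoc, mul_assoc]
      _ = c ^ (i + 1) • (b ^ (i + 1) * a) := by
          rw [h, mul_smul_comm, smul_smul, ← pow_succ, ← mul_assoc, ← pow_succ]

theorem MatIrreducible.le_of_pow_eq_smul_one {n k : ℕ} {M : Fin 2 → Matrix (Fin n) (Fin n) ℂ}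
    (hM : MatIrreducible M) {c μ : ℂ} (hrel : M 0 * M 1 = c • (M 1 * M 0)) (hk : 0 < k)
    (hpow : M 1 ^ k = μ • 1) : n ≤ k := by
  rcases Nat.eq_zero_or_pos n with rfl | hn
  · exact Nat.zero_le k
  have : Nonempty (Fin n) := Fin.pos_iff_nonempty.mp hn
  obtain ⟨l, hl⟩ := exists_eigenvalue (toLin' (M 0))
  obtain ⟨v, hv⟩ := hl.exists_hasEigenvector
  have hMv : M 0 *ᵥ v = l • v := hv.apply_eq_smul
  set W := Submodule.span ℂ (Set.range fun i : Fin k => M 1 ^ (i : ℕ) *ᵥ v)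
  have hpowW : ∀ i < k, M 1 ^ i *ᵥ v ∈ W := fun i hi => Submodule.subset_span ⟨⟨i, hi⟩, rfl⟩
  have hvW : v ∈ W := by simpa using hpowW 0 hk
  have hmaps : ∀ X : Matrix (Fin n) (Fin n) ℂ, (∀ i < k, X *ᵥ (M 1 ^ i *ᵥ v) ∈ W) →
      ∀ w ∈ W, X *ᵥ w ∈ W := by
    intro X hX
    suffices W ≤ W.comap (toLin' X) from fun w hw => this hw
    exact Submodule.span_le.mpr (Set.range_subset_iff.mpr fun i => hX i i.2)
  have hinv : ∀ j, ∀ w ∈ W, M j *ᵥ w ∈ W := by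
    refine Fin.forall_fin_two.mpr ⟨hmaps _ fun i hi => ?_, hmaps _ fun i hi => ?_⟩
    · rw [mulVec_mulVec, mul_pow_eq_smul_pow_mul hrel i, smul_mulVec, ← mulVec_mulVec, hMv,
        mulVec_smul, smul_smul]
      exact W.smul_mem _ (hpowW i hi)
    · rw [mulVec_mulVec, ← pow_succ']
      rcases (show i + 1 ≤ k from hi).lt_or_eq with hlt | heq
      · exact hpowW _ hlt
      · rw [heq, hpow, smul_mulVec, one_mulVec]
        exact W.smul_mem _ hvW
  rcases hM W hinv with h | h
  · exact absurd ((Submodule.mem_bot ℂ).mp (h ▸ hvW)) hv.2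
  · calc n = Module.finrank ℂ W := by rw [h, finrank_top, Module.finrank_fin_fun]
      _ ≤ k := (finrank_range_le_card _).trans (by simp)

end

/-- If there exists an irreducible unitary representation `ρ : F₂ → U(n)` with
`ρ(aba⁻¹b⁻¹) = ζ^m I` where `ζ = e^{2πi/n}`, then `n` and `m` are coprime. -/
theorem stmt0 (n : ℕ) (hn : 1 ≤ n) (m : ℤ)
    (ρ : FreeGroup (Fin 2) →* Matrix.unitaryGroup (Fin n) ℂ)
    (hirr : MatIrreducible (fun g : FreeGroup (Fin 2) => (ρ g : Matrix (Fin n) (Fin n) ℂ)))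
    (hc : ((ρ (FreeGroup.of 0 * FreeGroup.of 1 * (FreeGroup.of 0)⁻¹ * (FreeGroup.of 1)⁻¹) :
        Matrix (Fin n) (Fin n) ℂ)) =
      (Complex.exp (2 * Real.pi * Complex.I / n)) ^ m • (1 : Matrix (Fin n) (Fin n) ℂ)) :
    Int.gcd n m = 1 := by
  set ζ := Complex.exp (2 * Real.pi * Complex.I / n)
  have hζ : IsPrimitiveRoot ζ n := Complex.isPrimitiveRoot_exp n (by omega)
  set ρ' := (Matrix.unitaryGroup (Fin n) ℂ).subtype.comp ρ
  set M : Fin 2 → Matrix (Fin n) (Fin n) ℂ := fun x => ρ' (FreeGroup.of x)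
  have hM : MatIrreducible M := hirr.of_closure_range_eq_top (FreeGroup.closure_range_of _)
  have hrel : M 0 * M 1 = ζ ^ m • (M 1 * M 0) := ρ'.map_mul_eq_smul_map_mul_of_map_commutator hc
  obtain ⟨k, hk⟩ : Int.gcd n m ∣ n := Nat.gcd_dvd_left _ _
  have hk0 : 0 < k := Nat.pos_of_ne_zero (by rintro rfl; omega)
  have hζk : (ζ ^ m) ^ k = 1 := by
    rw [← zpow_natCast, ← zpow_mul, hζ.zpow_eq_one_iff_dvd, hk, Nat.cast_mul]
    exact mul_dvd_mul_right (Int.gcd_dvd_right _ _) _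
  obtain ⟨μ, hμ⟩ := hM.exists_eq_smul_one (X := M 1 ^ k) <| Fin.forall_fin_two.mpr
    ⟨by rw [Commute, SemiconjBy, mul_pow_eq_smul_pow_mul hrel, hζk, one_smul],
      (Commute.refl _).pow_left k⟩
  have hnk : Int.gcd n m * k ≤ 1 * k := by
    rw [one_mul, ← hk]; exact hM.le_of_pow_eq_smul_one hrel hk0 hμ
  have hd1 : Int.gcd n m ≤ 1 := Nat.le_of_mul_le_mul_right hnk hk0
  have hd0 : 0 < Int.gcd n m := Int.gcd_pos_of_ne_zero_left m (by omega)
  omega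
end

section
/- Let V be a vector space and W ⊆ V a finite-dimensional subspace of dimension d. Let A : V → V be a linear automorphism such that the induced map ⋀^d A on ⋀^d V maps the line ⋀^d W ⊆ ⋀^d V into itself. Then A(W) = W. -/
/-!
Pick a basis `w₁, …, w_d` of `W` and put `ω = w₁ ∧ ⋯ ∧ w_d`, which spans the line `⋀^d W`.
Since a wedge of vectors vanishes exactly when they are linearly dependent, `u ∈ W` iff
`u ∧ ω = 0`. If `⋀A` preserves the line then `⋀A ω = c • ω` with `c ≠ 0` (as `A` is injective),
so for `u ∈ W` we get `c • (Au ∧ ω) = ⋀A (u ∧ ω) = 0`, i.e. `Au ∈ W`; equality follows by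
comparing dimensions.
-/

/-- The line `⋀^d W` inside the exterior algebra of `V`, for a `d`-dimensional
subspace `W ⊆ V`: the span of all products `w₁ ∧ ⋯ ∧ w_d` with `wᵢ ∈ W`. -/
def exteriorLine (K : Type*) [Field K] {V : Type*} [AddCommGroup V] [Module K V]
    (W : Submodule K V) (d : ℕ) : Submodule K (ExteriorAlgebra K V) :=
  Submodule.span K {x | ∃ w : Fin d → V, (∀ i, w i ∈ W) ∧
    x = (List.ofFn fun i => ExteriorAlgebra.ι K (w i)).prod}

theorem AlternatingMap.apply_eq_basis_det_smul {R M N ι : Type*} [CommRing R] [AddCommGroup M]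
    [Module R M] [AddCommGroup N] [Module R N] [Fintype ι] [DecidableEq ι]
    (e : Module.Basis ι R M) (f : M [⋀^ι]→ₗ[R] N) (v : ι → M) :
    f v = e.det v • f e := by
  suffices f = (LinearMap.toSpanSingleton R N (f e)).compAlternatingMap e.det by
    conv_lhs => rw [this]
    rfl
  refine e.ext_alternating fun i hi => ?_
  let σ : Equiv.Perm ι := Equiv.ofBijective i (Finite.injective_iff_bijective.1 hi)
  change f (e ∘ σ) = (LinearMap.toSpanSingleton R N (f e)).compAlternatingMap e.det (e ∘ σ)
  simp [AlternatingMap.map_perm, e.det_self, Units.smul_def]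

theorem Module.Basis.span_range_subtype_comp {R M ι : Type*} [Semiring R] [AddCommMonoid M]
    [Module R M] {W : Submodule R M} (b : Module.Basis ι R W) :
    Submodule.span R (Set.range (W.subtype ∘ b)) = W := by
  rw [Set.range_comp, ← Submodule.map_span, b.span_eq, Submodule.map_subtype_top]

namespace ExteriorAlgebra

variable {K V : Type*} [Field K] [AddCommGroup V] [Module K V]

theorem ιMulti_ne_zero_of_linearIndependent {n : ℕ} {v : Fin n → V}
    (hv : LinearIndependent K v) : ιMulti K n v ≠ 0 := by
  have := (exteriorPower.ιMulti_family_linearIndependent_field (n := n) hv).ne_zero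
    (Set.powersetCard.ofFinEmbEquiv (OrderIso.refl (Fin n)).toOrderEmbedding)
  rw [Ne, ← Submodule.coe_eq_zero] at this
  simpa [exteriorPower.ιMulti_family] using this

theorem ιMulti_eq_zero_iff {n : ℕ} {v : Fin n → V} :
    ιMulti K n v = 0 ↔ ¬LinearIndependent K v :=
  ⟨fun h hv => ιMulti_ne_zero_of_linearIndependent hv h, (ιMulti K n).map_linearDependent v⟩

theorem ι_mul_ιMulti_eq_zero_iff {n : ℕ} {v : Fin n → V} (hv : LinearIndependent K v) (u : V) :
    ι K u * ιMulti K n v = 0 ↔ u ∈ Submodule.span K (Set.range v) := by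
  have hcons : ι K u * ιMulti K n v = ιMulti K (n + 1) (Fin.cons u v) := by
    rw [ιMulti_succ_apply]
    rfl
  rw [hcons, ιMulti_eq_zero_iff, linearIndependent_finCons, not_and, not_not]
  exact ⟨fun h => h hv, fun h _ => h⟩

theorem map_span_le_of_map_ιMulti_eq_smul {n : ℕ} {v : Fin n → V} (hv : LinearIndependent K v)
    (f : V →ₗ[K] V) {c : K} (hc0 : c ≠ 0) (hc : map f (ιMulti K n v) = c • ιMulti K n v) :
    (Submodule.span K (Set.range v)).map f ≤ Submodule.span K (Set.range v) := by
  rintro _ ⟨u, hu, rfl⟩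
  have h := congrArg (map f) ((ι_mul_ιMulti_eq_zero_iff hv u).2 hu)
  rw [map_mul, map_apply_ι, hc, mul_smul_comm, map_zero] at h
  exact (ι_mul_ιMulti_eq_zero_iff hv _).1 ((smul_eq_zero.1 h).resolve_left hc0)

end ExteriorAlgebra

open ExteriorAlgebra in
theorem exteriorLine_eq_span_ιMulti {K V : Type*} [Field K] [AddCommGroup V] [Module K V]
    {W : Submodule K V} {d : ℕ} (b : Module.Basis (Fin d) K W) :
    exteriorLine K W d = K ∙ ιMulti K d (W.subtype ∘ b) := by
  apply le_antisymm
  · refine Submodule.span_le.2 ?_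
    rintro _ ⟨w, hw, rfl⟩
    rw [← ιMulti_apply, SetLike.mem_coe, Submodule.mem_span_singleton]
    exact ⟨_, (((ιMulti K d).compLinearMap W.subtype).apply_eq_basis_det_smul b
      fun i => ⟨w i, hw i⟩).symm⟩
  · exact (Submodule.span_singleton_le_iff_mem _ _).2
      (Submodule.subset_span ⟨W.subtype ∘ b, fun i => (b i).2, ιMulti_apply _⟩)

/-- Ramanan's observation: if `W ⊆ V` has dimension `d` and a linear automorphism
`A` of `V` maps the line `⋀^d W ⊆ ⋀^d V` into itself, then `A(W) = W`. -/
theorem stmt4 {K : Type*} [Field K] {V : Type*} [AddCommGroup V] [Module K V]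
    (W : Submodule K V) [FiniteDimensional K W] (d : ℕ) (hd : Module.finrank K W = d)
    (A : V ≃ₗ[K] V)
    (hmap : Submodule.map (ExteriorAlgebra.map A.toLinearMap).toLinearMap
        (exteriorLine K W d) ≤ exteriorLine K W d) :
    Submodule.map A.toLinearMap W = W := by
  let b := Module.finBasisOfFinrankEq K W hd
  have hli : LinearIndependent K (W.subtype ∘ b) := b.linearIndependent.map' _ W.ker_subtype
  set ω := ExteriorAlgebra.ιMulti K d (W.subtype ∘ b)
  have hline := exteriorLine_eq_span_ιMulti b
  obtain ⟨c, hc⟩ : ∃ c : K, c • ω = ExteriorAlgebra.map A.toLinearMap ω := by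
    rw [← Submodule.mem_span_singleton, ← hline]
    exact hmap (Submodule.mem_map_of_mem (hline ▸ Submodule.mem_span_singleton_self ω))
  have hc0 : c ≠ 0 := by
    rintro rfl
    refine ExteriorAlgebra.ιMulti_ne_zero_of_linearIndependent (hli.map' _ A.ker) ?_
    rw [← ExteriorAlgebra.map_apply_ιMulti, ← hc, zero_smul]
  have hAW : W.map A.toLinearMap ≤ W := by
    simpa only [b.span_range_subtype_comp] using
      ExteriorAlgebra.map_span_le_of_map_ιMulti_eq_smul hli A.toLinearMap hc0 hc.symm
  exact Submodule.eq_of_le_of_finrank_le hAW (LinearEquiv.finrank_map_eq A W).ge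
end

section
/- Let F₂ be the free group on a, b and c = aba⁻¹b⁻¹. For any integers n ≥ 1 and m (not necessarily coprime to n), there exists an indecomposable representation ρ : F₂ → GL(n, ℂ) with ρ(c) = e^{2πim/n}·I. -/
/-!
Let `ζ = e^{2πim/n}`, a primitive `p`-th root of unity with `n = p h`. On `ℂ^p ⊗ ℂ^h` send
`a ↦ C ⊗ J` and `b ↦ S ⊗ 1`, where `C = diag(ζ^i)` and `S` are the clock and shift matrices
(`C S = ζ S C`, so `ρ(c) = ζ`) and `J` is a unipotent Jordan block.

Indecomposability amounts to every idempotent `T` commuting with the image being `0` or `1`.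
In blocks, `ζ^j T_ij J = ζ^i J T_ij`; for `i ≠ j` this forces `T_ij = 0`, since `Y ↦ J Y J⁻¹`
is unipotent and so has no eigenvalue other than `1`. Commuting with `S ⊗ 1` makes all diagonal
blocks equal, so `T = 1 ⊗ E` with `E` an idempotent commuting with `J`. The kernel of a
nilpotent Jordan block is a line, and it lies in every nonzero invariant subspace, so it lies in
the range of `E` if `E ≠ 0` and in that of `1 - E` if `E ≠ 1`; both cannot happen.
-/

open Matrix
open scoped Kronecker

def TrivialIdempotentCommutant {R : Type*} [MonoidWithZero R] (S : Set R) : Prop :=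
  ∀ e : R, IsIdempotentElem e → (∀ s ∈ S, Commute e s) → e = 0 ∨ e = 1

namespace TrivialIdempotentCommutant

variable {R R' : Type*} [MonoidWithZero R] [MonoidWithZero R'] {S : Set R}

theorem map {F : Type*} [EquivLike F R R'] [MulEquivClass F R R']
    (hS : TrivialIdempotentCommutant S) (f : F) : TrivialIdempotentCommutant (f '' S) := by
  intro e he hcomm
  set g : R ≃* R' := MulEquivClass.toMulEquiv f
  have key := hS (g.symm e) (he.map g.symm) fun s hs ↦ by
    simpa [g] using (hcomm (f s) ⟨s, hs, rfl⟩).map g.symm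
  simpa [g] using key.imp (congrArg g) (congrArg g)

theorem eq_bot_or_eq_bot {K E : Type*} [Ring K] [AddCommGroup E] [Module K E]
    {S : Set (Module.End K E)} (hS : TrivialIdempotentCommutant S) {W₁ W₂ : Submodule K E}
    (h₁ : ∀ f ∈ S, W₁ ∈ Module.End.invtSubmodule f)
    (h₂ : ∀ f ∈ S, W₂ ∈ Module.End.invtSubmodule f) (hW : IsCompl W₁ W₂) : W₁ = ⊥ ∨ W₂ = ⊥ := by
  have hπ := Submodule.isIdempotentElem_projection hW
  refine (hS _ hπ fun f hf ↦ ?_).imp (fun h ↦ ?_) fun h ↦ ?_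
  · rw [LinearMap.IsIdempotentElem.commute_iff hπ, Submodule.range_projection,
      Submodule.ker_projection]
    exact ⟨h₁ f hf, h₂ f hf⟩
  · rw [← Submodule.range_projection hW, h, LinearMap.range_zero]
  · rw [← Submodule.ker_projection hW, h, Module.End.one_eq_id, LinearMap.ker_id]

end TrivialIdempotentCommutant

section Nilpotent

variable {K V : Type*} [Field K] [AddCommGroup V] [Module K V]

theorem eq_zero_of_isNilpotent_of_apply_eq_smul {f : Module.End K V} (hf : IsNilpotent f)
    {μ : K} (hμ : μ ≠ 0) {x : V} (hx : f x = μ • x) : x = 0 := by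
  by_contra hx0
  have : f.HasEigenvalue μ := Module.End.hasEigenvalue_of_hasEigenvector
    ⟨Module.End.mem_eigenspace_iff.mpr hx, hx0⟩
  exact hμ (this.isNilpotent_of_isNilpotent hf).eq_zero

theorem eq_zero_of_smul_mul_one_add_eq_smul_one_add_mul {R : Type*} [Ring R] [Algebra K R]
    {N X : R} (hN : IsNilpotent N) {a b : K} (hab : a ≠ b)
    (h : a • (X * (1 + N)) = b • ((1 + N) * X)) : X = 0 := by
  -- `X` is an eigenvector, for the eigenvalue `a - b ≠ 0`, of the nilpotent operator `δ`.
  set δ : Module.End K R := b • LinearMap.mulLeft K N - a • LinearMap.mulRight K N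
  have hδ : IsNilpotent δ :=
    (((LinearMap.commute_mulLeft_right N N).smul_left b).smul_right a).isNilpotent_sub
      (((LinearMap.isNilpotent_mulLeft_iff K N).mpr hN).smul b)
      (((LinearMap.isNilpotent_mulRight_iff K N).mpr hN).smul a)
  refine eq_zero_of_isNilpotent_of_apply_eq_smul hδ (sub_ne_zero.mpr hab) ?_
  simp only [δ, LinearMap.sub_apply, LinearMap.smul_apply, LinearMap.mulLeft_apply,
    LinearMap.mulRight_apply]
  simp only [mul_add, add_mul, mul_one, one_mul, smul_add] at h
  rw [sub_smul, sub_eq_sub_iff_add_eq_add]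
  convert h.symm using 1; abel

theorem Module.End.exists_pow_apply_ne_zero_and_apply_eq_zero {N : Module.End K V}
    (hN : IsNilpotent N) {x : V} (hx : x ≠ 0) : ∃ k : ℕ, (N ^ k) x ≠ 0 ∧ N ((N ^ k) x) = 0 := by
  classical
  obtain ⟨n, hn⟩ := hN
  have hP : ∃ k, (N ^ k) x = 0 := ⟨n, by simp [hn]⟩
  obtain ⟨j, hj⟩ : ∃ j, Nat.find hP = j + 1 :=
    Nat.exists_eq_add_one.mpr <| Nat.pos_of_ne_zero fun h0 ↦
      hx (by simpa [h0] using Nat.find_spec hP)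
  refine ⟨j, Nat.find_min hP (by omega), ?_⟩
  rw [← Module.End.mul_apply, ← pow_succ', ← hj]
  exact Nat.find_spec hP

theorem IsIdempotentElem.apply_eq_self_of_commute_of_ker_le_span {N E : Module.End K V} {v : V}
    (hN : IsNilpotent N) (hker : LinearMap.ker N ≤ K ∙ v) (hE : IsIdempotentElem E)
    (hEN : Commute E N) (hE0 : E ≠ 0) : v ≠ 0 ∧ E v = v := by
  obtain ⟨y, hy⟩ : ∃ y, E y ≠ 0 := by
    by_contra! h
    exact hE0 (LinearMap.ext h)
  obtain ⟨k, hk0, hk⟩ := Module.End.exists_pow_apply_ne_zero_and_apply_eq_zero hN hy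
  obtain ⟨c, hc⟩ := Submodule.mem_span_singleton.mp (hker hk)
  have hEw : E ((N ^ k) (E y)) = (N ^ k) (E y) := by
    rw [← Module.End.mul_apply, (hEN.pow_right k).eq, Module.End.mul_apply,
      ← Module.End.mul_apply E E, hE.eq]
  have hc0 : c ≠ 0 := by
    rintro rfl
    exact hk0 (by rw [← hc, zero_smul])
  refine ⟨fun hv ↦ hk0 (by rw [← hc, hv, smul_zero]), smul_right_injective V hc0 ?_⟩
  simp only [← map_smul, hc, hEw]

theorem IsIdempotentElem.eq_zero_or_eq_one_of_commute_of_ker_le_span {N E : Module.End K V}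
    {v : V} (hN : IsNilpotent N) (hker : LinearMap.ker N ≤ K ∙ v) (hE : IsIdempotentElem E)
    (hEN : Commute E N) : E = 0 ∨ E = 1 := by
  by_contra! h
  obtain ⟨hv, hEv⟩ := hE.apply_eq_self_of_commute_of_ker_le_span hN hker hEN h.1
  obtain ⟨-, hEv'⟩ := hE.one_sub.apply_eq_self_of_commute_of_ker_le_span hN hker
    ((Commute.one_left N).sub_left hEN) (sub_ne_zero.mpr h.2.symm)
  rw [LinearMap.sub_apply, Module.End.one_apply, hEv, sub_self] at hEv'
  exact hv hEv'.symm

variable (K) in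
def nilpotentJordanBlock (h : ℕ) : Matrix (Fin h) (Fin h) K :=
  Matrix.of fun s t ↦ if (t : ℕ) = s + 1 then 1 else 0

theorem isNilpotent_nilpotentJordanBlock (h : ℕ) : IsNilpotent (nilpotentJordanBlock K h) := by
  have hup : (nilpotentJordanBlock K h).IsUpperTriangular := fun s t hts ↦ by
    simp only [nilpotentJordanBlock, of_apply, ite_eq_right_iff]
    have : (t : ℕ) < s := hts
    omega
  have hchar : (nilpotentJordanBlock K h).charpoly = Polynomial.X ^ h := by
    rw [charpoly_of_isUpperTriangular _ hup]
    simp [nilpotentJordanBlock]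
  refine ⟨h, ?_⟩
  simpa [hchar] using Matrix.aeval_self_charpoly (nilpotentJordanBlock K h)

theorem ker_toLinAlgEquiv'_nilpotentJordanBlock (h : ℕ) [NeZero h] :
    LinearMap.ker (toLinAlgEquiv' (nilpotentJordanBlock K h)) ≤ K ∙ Pi.single 0 1 := by
  intro x hx
  refine Submodule.mem_span_singleton.mpr ⟨x 0, funext fun t ↦ ?_⟩
  rcases eq_or_ne t 0 with rfl | ht
  · simp
  obtain ⟨s, hs⟩ : ∃ s : Fin h, (t : ℕ) = s + 1 :=
    ⟨⟨t - 1, by omega⟩, by have := Fin.val_ne_zero_iff.mpr ht; dsimp; omega⟩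
  have hs0 := congrFun (LinearMap.mem_ker.mp hx) s
  rw [toLinAlgEquiv'_apply, mulVec, dotProduct, Finset.sum_eq_single t] at hs0
  · simpa [nilpotentJordanBlock, hs, ht] using hs0.symm
  · intro u _ hu
    simp only [nilpotentJordanBlock, of_apply, ite_mul, one_mul, zero_mul, ite_eq_right_iff]
    intro hu'
    exact absurd (Fin.ext (hu'.trans hs.symm)) hu
  · simp

theorem eq_zero_or_eq_one_of_commute_one_add_nilpotentJordanBlock {h : ℕ} [NeZero h]
    {C : Matrix (Fin h) (Fin h) K} (hC : IsIdempotentElem C)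
    (hCJ : Commute C (1 + nilpotentJordanBlock K h)) : C = 0 ∨ C = 1 := by
  have hCN : Commute C (nilpotentJordanBlock K h) := by
    simpa only [add_sub_cancel_left] using hCJ.sub_right (Commute.one_right C)
  have := (hC.map (toLinAlgEquiv' (R := K))).eq_zero_or_eq_one_of_commute_of_ker_le_span
    ((isNilpotent_nilpotentJordanBlock h).map (toLinAlgEquiv' (R := K)))
    (ker_toLinAlgEquiv'_nilpotentJordanBlock h) (hCN.map (toLinAlgEquiv' (R := K)))
  exact this.imp (fun h0 ↦ toLinAlgEquiv'.injective (h0.trans (map_zero _).symm))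
    fun h1 ↦ toLinAlgEquiv'.injective (h1.trans (map_one _).symm)

end Nilpotent

section ClockShift

variable {K : Type*} [Field K] {p : ℕ} {ζ : K}

variable (p) in
def clockMatrix (ζ : K) : Matrix (ZMod p) (ZMod p) K := diagonal fun i ↦ ζ ^ i.val

-- `(cyclicShiftMatrix K p *ᵥ v) i = v (i - 1)`
variable (K p) in
def cyclicShiftMatrix : Matrix (ZMod p) (ZMod p) K :=
  Equiv.Perm.permMatrix K (Equiv.subRight (1 : ZMod p))

variable [NeZero p]

theorem pow_val_add_one_of_pow_eq_one (hζ : ζ ^ p = 1) (x : ZMod p) :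
    ζ ^ (x + 1).val = ζ ^ x.val * ζ := by
  rw [ZMod.val_add, ← pow_eq_pow_mod _ hζ, pow_add, ZMod.val_one_eq_one_mod,
    ← pow_eq_pow_mod _ hζ, pow_one]

theorem clockMatrix_mul_cyclicShiftMatrix (hζ : ζ ^ p = 1) :
    clockMatrix p ζ * cyclicShiftMatrix K p = ζ • (cyclicShiftMatrix K p * clockMatrix p ζ) := by
  ext i j
  simp only [clockMatrix, cyclicShiftMatrix, diagonal_mul, mul_diagonal, PEquiv.toMatrix_apply,
    Equiv.toPEquiv_apply, Equiv.subRight_apply, Option.mem_def, Option.some.injEq, mul_ite,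
    ite_mul, mul_one, mul_zero, one_mul, zero_mul, Matrix.smul_apply, smul_eq_mul]
  split_ifs with hij
  · rw [← hij, mul_comm, ← pow_val_add_one_of_pow_eq_one hζ, sub_add_cancel]
  · rfl

end ClockShift

section Blocks

variable {R ι κ : Type*} [CommSemiring R] [DecidableEq ι]

theorem submatrix_mul_diagonal_kronecker [Fintype ι] [Fintype κ] (T : Matrix (ι × κ) (ι × κ) R)
    (d : ι → R) (Y : Matrix κ κ R) (i j : ι) :
    (T * (diagonal d ⊗ₖ Y)).submatrix (Prod.mk i) (Prod.mk j) =
      d j • (T.submatrix (Prod.mk i) (Prod.mk j) * Y) := by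
  ext s t
  simp [mul_apply, Fintype.sum_prod_type, diagonal_apply, Finset.mul_sum, mul_left_comm]

theorem submatrix_diagonal_kronecker_mul [Fintype ι] [Fintype κ] (T : Matrix (ι × κ) (ι × κ) R)
    (d : ι → R) (Y : Matrix κ κ R) (i j : ι) :
    ((diagonal d ⊗ₖ Y) * T).submatrix (Prod.mk i) (Prod.mk j) =
      d i • (Y * T.submatrix (Prod.mk i) (Prod.mk j)) := by
  ext s t
  simp [mul_apply, Fintype.sum_prod_type, diagonal_apply, Finset.mul_sum, mul_assoc]

theorem submatrix_mul_permMatrix_kronecker_one [Fintype ι] [Fintype κ] [DecidableEq κ]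
    (T : Matrix (ι × κ) (ι × κ) R) (σ : Equiv.Perm ι) (i j : ι) :
    (T * (σ.permMatrix R ⊗ₖ 1)).submatrix (Prod.mk i) (Prod.mk j) =
      T.submatrix (Prod.mk i) (Prod.mk (σ.symm j)) := by
  ext s t
  simp [mul_apply, Fintype.sum_prod_type, PEquiv.toMatrix_apply, one_apply,
    ← Equiv.eq_symm_apply]

theorem submatrix_permMatrix_kronecker_one_mul [Fintype ι] [Fintype κ] [DecidableEq κ]
    (T : Matrix (ι × κ) (ι × κ) R) (σ : Equiv.Perm ι) (i j : ι) :
    ((σ.permMatrix R ⊗ₖ 1) * T).submatrix (Prod.mk i) (Prod.mk j) =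
      T.submatrix (Prod.mk (σ i)) (Prod.mk j) := by
  ext s t
  simp [mul_apply, Fintype.sum_prod_type, PEquiv.toMatrix_apply, one_apply]

theorem submatrix_one_kronecker (X : Matrix κ κ R) (i : ι) :
    ((1 : Matrix ι ι R) ⊗ₖ X).submatrix (Prod.mk i) (Prod.mk i) = X := by
  ext s t
  simp

theorem eq_one_kronecker_of_submatrix (T : Matrix (ι × κ) (ι × κ) R) (C : Matrix κ κ R)
    (hoff : ∀ i j, i ≠ j → T.submatrix (Prod.mk i) (Prod.mk j) = 0)
    (hdiag : ∀ i, T.submatrix (Prod.mk i) (Prod.mk i) = C) : T = 1 ⊗ₖ C := by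
  ext ⟨i, s⟩ ⟨j, t⟩
  rcases eq_or_ne i j with rfl | hij
  · simpa using congr_fun (congr_fun (hdiag i) s) t
  · simpa [hij] using congr_fun (congr_fun (hoff i j hij) s) t

end Blocks

section Model

variable {K κ : Type*} [Field K] [Fintype κ] [DecidableEq κ] {p : ℕ} [NeZero p] {ζ : K}

theorem isUnit_kronecker {R ι : Type*} [CommRing R] [Fintype ι] [DecidableEq ι]
    {A : Matrix ι ι R} {B : Matrix κ κ R} (hA : IsUnit A) (hB : IsUnit B) : IsUnit (A ⊗ₖ B) := by
  rw [isUnit_iff_isUnit_det] at hA hB ⊢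
  rw [det_kronecker]
  exact (hA.pow _).mul (hB.pow _)

theorem isUnit_clockMatrix (hζ : ζ ≠ 0) : IsUnit (clockMatrix p ζ) :=
  isUnit_diagonal.mpr (Pi.isUnit_iff.mpr fun _ ↦ (pow_ne_zero _ hζ).isUnit)

theorem isUnit_cyclicShiftMatrix : IsUnit (cyclicShiftMatrix K p) := by
  rw [isUnit_iff_isUnit_det, cyclicShiftMatrix, det_permutation]
  exact (Units.isUnit _).map (Int.castRingHom K)

theorem clockMatrix_kronecker_mul_cyclicShiftMatrix_kronecker (hζ : ζ ^ p = 1)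
    (Y : Matrix κ κ K) :
    (clockMatrix p ζ ⊗ₖ Y) * (cyclicShiftMatrix K p ⊗ₖ 1) =
      ζ • ((cyclicShiftMatrix K p ⊗ₖ 1) * (clockMatrix p ζ ⊗ₖ Y)) := by
  rw [← mul_kronecker_mul, ← mul_kronecker_mul, clockMatrix_mul_cyclicShiftMatrix hζ,
    smul_kronecker, mul_one, one_mul]

variable {h : ℕ} [NeZero h]

theorem trivialIdempotentCommutant_clockMatrix_kronecker (hζ : IsPrimitiveRoot ζ p) :
    TrivialIdempotentCommutant
      {clockMatrix p ζ ⊗ₖ (1 + nilpotentJordanBlock K h), cyclicShiftMatrix K p ⊗ₖ 1} := by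
  intro T hT hcomm
  set J := 1 + nilpotentJordanBlock K h
  set blk : ZMod p → ZMod p → Matrix (Fin h) (Fin h) K :=
    fun i j ↦ T.submatrix (Prod.mk i) (Prod.mk j)
  have hclock : ∀ i j, ζ ^ j.val • (blk i j * J) = ζ ^ i.val • (J * blk i j) := fun i j ↦ by
    have := congrArg (fun M ↦ M.submatrix (Prod.mk i) (Prod.mk j))
      (hcomm _ (Set.mem_insert _ _)).eq
    simpa only [clockMatrix, submatrix_mul_diagonal_kronecker, submatrix_diagonal_kronecker_mul]
      using this
  have hoff : ∀ i j, i ≠ j → blk i j = 0 := fun i j hij ↦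
    eq_zero_of_smul_mul_one_add_eq_smul_one_add_mul (isNilpotent_nilpotentJordanBlock h)
      (fun hζij ↦ hij (ZMod.val_injective p (hζ.pow_inj (ZMod.val_lt j) (ZMod.val_lt i) hζij)).symm)
      (hclock i j)
  have hshift : ∀ i j, blk (i + 1) (j + 1) = blk i j := fun i j ↦ by
    have := congrArg (fun M ↦ M.submatrix (Prod.mk (i + 1)) (Prod.mk j))
      (hcomm _ (Set.mem_insert_of_mem _ rfl)).eq
    simpa [cyclicShiftMatrix, submatrix_mul_permMatrix_kronecker_one,
      submatrix_permMatrix_kronecker_one_mul] using this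
  have hdiag : ∀ i, blk i i = blk 0 0 := fun i ↦ by
    rw [← ZMod.natCast_zmod_val i]
    induction i.val with
    | zero => simp
    | succ k ih => rw [Nat.cast_succ, hshift, ih]
  have hTC : T = 1 ⊗ₖ blk 0 0 := eq_one_kronecker_of_submatrix T _ hoff hdiag
  have hC : blk 0 0 * blk 0 0 = blk 0 0 := by
    have := congrArg (fun M ↦ M.submatrix (Prod.mk (0 : ZMod p)) (Prod.mk 0)) hT.eq
    rw [hTC, ← mul_kronecker_mul, one_mul] at this
    simpa only [submatrix_one_kronecker] using this
  have hCJ : blk 0 0 * J = J * blk 0 0 := by simpa using hclock 0 0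
  rcases eq_zero_or_eq_one_of_commute_one_add_nilpotentJordanBlock hC hCJ with h0 | h1
  · exact Or.inl (by rw [hTC, h0, kronecker_zero])
  · exact Or.inr (by rw [hTC, h1, one_kronecker_one])

end Model

section Representation

variable {K κ : Type*} [Field K] [Fintype κ] [DecidableEq κ]

theorem exists_freeGroup_hom_of_trivialIdempotentCommutant {A B : Matrix κ κ K}
    (hA : IsUnit A) (hB : IsUnit B) {c : K} (hAB : A * B = c • (B * A))
    (hS : TrivialIdempotentCommutant {A, B}) :
    ∃ ρ : FreeGroup (Fin 2) →* GL κ K,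
      ((ρ (FreeGroup.of 0 * FreeGroup.of 1 * (FreeGroup.of 0)⁻¹ * (FreeGroup.of 1)⁻¹) :
          GL κ K) : Matrix κ κ K) = c • 1 ∧
      ∀ W₁ W₂ : Submodule K (κ → K),
        (∀ g, ∀ v ∈ W₁, ((ρ g : GL κ K) : Matrix κ κ K) *ᵥ v ∈ W₁) →
        (∀ g, ∀ v ∈ W₂, ((ρ g : GL κ K) : Matrix κ κ K) *ᵥ v ∈ W₂) →
        IsCompl W₁ W₂ → W₁ = ⊥ ∨ W₂ = ⊥ := by
  set ρ : FreeGroup (Fin 2) →* GL κ K := FreeGroup.lift ![hA.unit, hB.unit]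
  have hρA : ((ρ (FreeGroup.of 0) : GL κ K) : Matrix κ κ K) = A := by simp [ρ]
  have hρB : ((ρ (FreeGroup.of 1) : GL κ K) : Matrix κ κ K) = B := by simp [ρ]
  refine ⟨ρ, ?_, fun W₁ W₂ h₁ h₂ hW ↦ ?_⟩
  · simp only [map_mul, map_inv, Units.val_mul, hρA, hρB]
    rw [hAB, smul_mul_assoc, smul_mul_assoc, mul_assoc B, ← hρA, Units.mul_inv, mul_one, ← hρB,
      Units.mul_inv]
  · have hS' := hS.map (toLinAlgEquiv' (R := K) (n := κ))
    rw [Set.image_pair] at hS'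
    refine hS'.eq_bot_or_eq_bot ?_ ?_ hW <;>
      simp only [Set.mem_insert_iff, Set.mem_singleton_iff, forall_eq_or_imp, forall_eq,
        Module.End.mem_invtSubmodule_iff_forall_mem_of_mem, toLinAlgEquiv'_apply, ← hρA, ← hρB]
    exacts [⟨h₁ _, h₁ _⟩, ⟨h₂ _, h₂ _⟩]

end Representation

/-- For any integers `n ≥ 1` and `m` (not necessarily coprime to `n`), there
exists an indecomposable representation `ρ : F₂ → GL(n, ℂ)` of the free group on
`a, b` with `ρ(aba⁻¹b⁻¹) = e^{2πim/n}·I`.  Indecomposability: `ℂⁿ` is not the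
direct sum of two nonzero invariant subspaces. -/
theorem stmt16 (n : ℕ) (hn : 1 ≤ n) (m : ℤ) :
    ∃ ρ : FreeGroup (Fin 2) →* GL (Fin n) ℂ,
      ((ρ (FreeGroup.of 0 * FreeGroup.of 1 * (FreeGroup.of 0)⁻¹ * (FreeGroup.of 1)⁻¹) :
          GL (Fin n) ℂ) : Matrix (Fin n) (Fin n) ℂ) =
        Complex.exp (2 * Real.pi * Complex.I * m / n) • (1 : Matrix (Fin n) (Fin n) ℂ) ∧
      ∀ W₁ W₂ : Submodule ℂ (Fin n → ℂ),
        (∀ g : FreeGroup (Fin 2), ∀ v ∈ W₁, ((ρ g : GL (Fin n) ℂ) : Matrix (Fin n) (Fin n) ℂ).mulVec v ∈ W₁) →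
        (∀ g : FreeGroup (Fin 2), ∀ v ∈ W₂, ((ρ g : GL (Fin n) ℂ) : Matrix (Fin n) (Fin n) ℂ).mulVec v ∈ W₂) →
        IsCompl W₁ W₂ → W₁ = ⊥ ∨ W₂ = ⊥ := by
  set ζ := Complex.exp (2 * Real.pi * Complex.I * m / n)
  have hζn : ζ ^ n = 1 := by
    rw [← Complex.exp_nat_mul, mul_div_cancel₀ _ (by exact_mod_cast (by omega : n ≠ 0)),
      mul_comm, Complex.exp_int_mul_two_pi_mul_I]
  set p := orderOf ζ
  have hζ : IsPrimitiveRoot ζ p := IsPrimitiveRoot.orderOf ζ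
  obtain ⟨h, hph⟩ : p ∣ n := orderOf_dvd_of_pow_eq_one hζn
  have : NeZero p := ⟨by rintro h0; simp [h0] at hph; omega⟩
  have : NeZero h := ⟨by rintro h0; simp [h0] at hph; omega⟩
  set F := reindexAlgEquiv ℂ ℂ
    (Fintype.equivFinOfCardEq (by simp [hph]) : ZMod p × Fin h ≃ Fin n)
  have hS := (trivialIdempotentCommutant_clockMatrix_kronecker hζ).map F
  rw [Set.image_pair] at hS
  refine exists_freeGroup_hom_of_trivialIdempotentCommutant
    ((isUnit_kronecker (isUnit_clockMatrix (hζ.ne_zero (NeZero.ne p)))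
      (isNilpotent_nilpotentJordanBlock h).isUnit_one_add).map F)
    ((isUnit_kronecker isUnit_cyclicShiftMatrix isUnit_one).map F) ?_ hS
  rw [← map_mul, clockMatrix_kronecker_mul_cyclicShiftMatrix_kronecker hζ.pow_eq_one, map_smul,
    map_mul]
end

section
/- Let σ : F₂ → U(p) be the Heisenberg representation with σ(a) = diag(ζ^q, ζ^{2q}, …, ζ^{pq}) for ζ = e^{2πi/p} and σ(b) the cyclic permutation matrix, where gcd(p,q) = 1, and let τ : F₂ → GL(h,ℂ) send a to the unipotent Jordan block J_h(1) and b to I. Then the only endomorphisms of ℂ^p ⊗ ℂ^h commuting with both (σ⊗τ)(a) and (σ⊗τ)(b) that are idempotent are the scalars 0 and I; hence σ⊗τ is indecomposable. -/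
/-!
Write `J = 1 + N` for the unipotent Jordan block, `N` the nilpotent shift, and view an
endomorphism `E` of `ℂ^p ⊗ ℂ^h` as a `p × p` matrix of `h × h` blocks `E r s`. Commuting
with `σ(a) ⊗ J = diag(d r • J)` says `d s • E r s J = d r • J E r s`. As `X ↦ N X` and
`X ↦ X N` are commuting nilpotent operators, the distinct eigenvalues `d r ≠ d s` force the
off-diagonal blocks to vanish, and the diagonal blocks commute with `N`. Commuting with the
cyclic shift `σ(b) ⊗ 1` makes all diagonal blocks equal to one idempotent `X`. Since `ker N`
is a line, an idempotent commuting with `N` either kills that line, and then everything by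
induction on the nilpotency order, or fixes it, and then `1 - X` kills everything. The
projection onto one summand of an invariant splitting is such an idempotent.
-/

open Kronecker Matrix

section Nilpotent

variable {K V : Type*} [Field K] [AddCommGroup V] [Module K V]

theorem IsNilpotent.eq_zero_of_apply_eq_smul {L : Module.End K V} (hL : IsNilpotent L)
    {c : K} (hc : c ≠ 0) {v : V} (hv : L v = c • v) : v = 0 := by
  obtain ⟨n, hn⟩ := hL
  have hpow : ∀ k : ℕ, (L ^ k) v = c ^ k • v := by
    intro k
    induction k with
    | zero => simp
    | succ k ih =>
      rw [_root_.pow_succ', Module.End.mul_apply, ih, map_smul, hv, smul_smul, _root_.pow_succ]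
  simpa [hn, pow_ne_zero n hc] using (hpow n).symm

theorem eq_zero_of_smul_mul_one_add_eq {A : Type*} [Ring A] [Algebra K A] {N X : A}
    (hN : IsNilpotent N) {a b : K} (hab : a ≠ b)
    (h : a • (X * (1 + N)) = b • ((1 + N) * X)) : X = 0 := by
  let L : Module.End K A := b • LinearMap.mulLeft K N - a • LinearMap.mulRight K N
  have hL : IsNilpotent L :=
    (((LinearMap.commute_mulLeft_right N N).smul_left b).smul_right a).isNilpotent_sub
      (((LinearMap.isNilpotent_mulLeft_iff K N).2 hN).smul b)
      (((LinearMap.isNilpotent_mulRight_iff K N).2 hN).smul a)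
  refine hL.eq_zero_of_apply_eq_smul (sub_ne_zero.2 hab) ?_
  simp only [mul_add, add_mul, mul_one, one_mul] at h
  simp only [L, LinearMap.sub_apply, LinearMap.smul_apply, LinearMap.mulLeft_apply,
    LinearMap.mulRight_apply]
  linear_combination (norm := module) -h

theorem Module.End.eq_zero_or_eq_one_of_commute_of_isNilpotent {N X : Module.End K V}
    (hN : IsNilpotent N) (hker : (LinearMap.ker N).IsPrincipal) (hX : IsIdempotentElem X)
    (hXN : Commute X N) : X = 0 ∨ X = 1 := by
  obtain ⟨e, he⟩ := hker.principal
  have hmem : ∀ {v}, N v = 0 → ∃ a : K, a • e = v := fun hv => by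
    rw [← Submodule.mem_span_singleton, ← he]; exact hv
  -- For `v ∈ ker (N ^ (k + 1))`, `Y v` lies in the line `ker N`, which `Y` kills,
  -- so `Y v = Y (Y v) = 0`.
  have hvanish :
      ∀ Y : Module.End K V, IsIdempotentElem Y → Commute Y N → Y e = 0 → Y = 0 := by
    intro Y hY hYN hYe
    obtain ⟨n, hn⟩ := hN
    have hk : ∀ k (v : V), (N ^ k) v = 0 → Y v = 0 := by
      intro k
      induction k with
      | zero => intro v hv; simp_all
      | succ k ih =>
        intro v hv
        rw [_root_.pow_succ, Module.End.mul_apply] at hv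
        have hNYv : N (Y v) = 0 := by
          rw [← Module.End.mul_apply, ← hYN.eq, Module.End.mul_apply, ih _ hv]
        obtain ⟨a, ha⟩ := hmem hNYv
        rw [← hY.eq, Module.End.mul_apply, ← ha, map_smul, hYe, smul_zero]
    exact LinearMap.ext fun v => hk n v (by simp [hn])
  have hNe : N e = 0 := by
    rw [← LinearMap.mem_ker, he]; exact Submodule.mem_span_singleton_self e
  obtain ⟨c, hc⟩ := hmem (show N (X e) = 0 by
    rw [← Module.End.mul_apply, ← hXN.eq, Module.End.mul_apply, hNe, map_zero])
  have hcc : (c * c - c) • e = 0 := by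
    rw [sub_smul, mul_smul, hc, ← map_smul, hc, ← Module.End.mul_apply, hX.eq, sub_self]
  rcases smul_eq_zero.1 hcc with hcc | he0
  · rcases IsIdempotentElem.iff_eq_zero_or_one.1 (sub_eq_zero.1 hcc) with rfl | rfl
    · exact Or.inl (hvanish X hX hXN (by rw [← hc, zero_smul]))
    · refine Or.inr (sub_eq_zero.1
        (hvanish (1 - X) hX.one_sub ((Commute.one_left N).sub_left hXN) ?_)).symm
      rw [LinearMap.sub_apply, ← hc, one_smul, Module.End.one_apply, sub_self]
  · exact Or.inl (hvanish X hX hXN (by rw [he0, map_zero]))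

end Nilpotent

namespace Matrix

variable (K : Type*) [Field K] (h : ℕ)

def shift : Matrix (Fin h) (Fin h) K := of fun i j => if (j : ℕ) = i + 1 then 1 else 0

variable {K h}

@[simp]
theorem shift_apply (i j : Fin h) : shift K h i j = if (j : ℕ) = i + 1 then 1 else 0 := rfl

theorem shift_pow_apply (k : ℕ) (i j : Fin h) :
    (shift K h ^ k) i j = if (j : ℕ) = i + k then 1 else 0 := by
  induction k generalizing j with
  | zero => simp [one_apply, Fin.ext_iff, eq_comm]
  | succ k ih =>
    simp only [pow_succ, mul_apply, ih, shift_apply, ite_mul, one_mul, zero_mul]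
    by_cases hik : (i : ℕ) + k < h
    · rw [Finset.sum_eq_single ⟨i + k, hik⟩ (fun l _ hl => if_neg fun h' => hl (Fin.ext h'))
        (by simp)]
      simp [Nat.add_assoc]
    · rw [Finset.sum_eq_zero fun l _ => if_neg (by omega), if_neg (by omega)]

theorem isNilpotent_shift : IsNilpotent (shift K h) :=
  ⟨h, by ext i j; rw [shift_pow_apply]; simp; omega⟩

theorem ker_toLin'_shift [NeZero h] :
    LinearMap.ker (toLin' (shift K h)) = K ∙ Pi.single 0 1 := by
  ext v
  simp only [LinearMap.mem_ker, toLin'_apply, Submodule.mem_span_singleton]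
  constructor
  · intro hv
    refine ⟨v 0, funext fun j => ?_⟩
    by_cases hj : (j : ℕ) = 0
    · obtain rfl : j = 0 := Fin.ext (by simpa using hj)
      simp
    · have hvj := congr_fun hv ⟨j - 1, by omega⟩
      rw [mulVec, dotProduct, Finset.sum_eq_single j] at hvj
      · rw [shift_apply, if_pos (by simp; omega), one_mul] at hvj
        simp [hvj, Fin.ext_iff, hj]
      · intro l _ hl
        rw [shift_apply, if_neg fun h' => hl (Fin.ext (by simp at h'; omega)), zero_mul]
      · simp
  · rintro ⟨a, rfl⟩
    ext i
    simp [shift, mulVec, dotProduct, Pi.single_apply]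

theorem eq_zero_or_eq_one_of_commute_shift [NeZero h] {X : Matrix (Fin h) (Fin h) K}
    (hX : IsIdempotentElem X) (hXN : Commute X (shift K h)) : X = 0 ∨ X = 1 := by
  have hker : (LinearMap.ker (toLinAlgEquiv' (shift K h))).IsPrincipal :=
    ⟨_, ker_toLin'_shift⟩
  have := Module.End.eq_zero_or_eq_one_of_commute_of_isNilpotent
    (isNilpotent_shift.map toLinAlgEquiv') hker (hX.map toLinAlgEquiv') (hXN.map toLinAlgEquiv')
  simpa [map_eq_zero_iff _ toLinAlgEquiv'.injective] using this

section Blocks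

variable {K A n : Type*} [Field K] [Ring A] [Algebra K A] [Fintype n] [DecidableEq n]
  {M : Matrix n n A} {N : A} {d : n → K}

theorem apply_eq_zero_of_commute_diagonal_smul (hN : IsNilpotent N)
    (hM : Commute M (diagonal fun i => d i • (1 + N))) {r s : n} (hrs : d r ≠ d s) :
    M r s = 0 := by
  have h := congr_fun₂ hM.eq r s
  rw [mul_diagonal, diagonal_mul, mul_smul_comm, smul_mul_assoc] at h
  exact eq_zero_of_smul_mul_one_add_eq hN hrs.symm h

theorem commute_apply_self_of_commute_diagonal_smul
    (hM : Commute M (diagonal fun i => d i • (1 + N))) {r : n} (hr : d r ≠ 0) :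
    Commute (M r r) N := by
  have h := congr_fun₂ hM.eq r r
  rw [mul_diagonal, diagonal_mul, mul_smul_comm, smul_mul_assoc] at h
  have h' : Commute (M r r) (1 + N) := smul_right_injective A hr h
  simpa using h'.sub_right (Commute.one_right _)

end Blocks

section Cyclic

variable {R : Type*} [Semiring R] {p : ℕ} [NeZero p] {M : Matrix (Fin p) (Fin p) R}

theorem apply_add_one_add_one_of_commute
    (hM : Commute M (of fun i j : Fin p => if i = j + 1 then (1 : R) else 0)) (r s : Fin p) :
    M (r + 1) (s + 1) = M r s := by
  simpa [mul_apply] using congr_fun₂ hM.eq (r + 1) s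

open Fin.NatCast in
theorem apply_self_eq_of_commute
    (hM : Commute M (of fun i j : Fin p => if i = j + 1 then (1 : R) else 0)) (r : Fin p) :
    M r r = M 0 0 := by
  have h : ∀ k : ℕ, M k k = M 0 0 := by
    intro k
    induction k with
    | zero => simp
    | succ k ih => rw [Nat.cast_succ, apply_add_one_add_one_of_commute hM, ih]
  simpa using h r

end Cyclic

theorem eq_zero_or_eq_one_of_commute_kronecker {p h : ℕ} [NeZero p] [NeZero h] {d : Fin p → K}
    (hd : Function.Injective d) (hd0 : ∀ r, d r ≠ 0)
    {E : Matrix (Fin p × Fin h) (Fin p × Fin h) K}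
    (hA : Commute E (diagonal d ⊗ₖ (1 + shift K h)))
    (hB : Commute E ((of fun i j : Fin p => if i = j + 1 then (1 : K) else 0) ⊗ₖ 1))
    (hE : IsIdempotentElem E) : E = 0 ∨ E = 1 := by
  let e := compAlgEquiv (Fin p) (Fin h) K K
  set M := e.symm E with hMdef
  have hMA : Commute M (diagonal fun r => d r • (1 + shift K h)) := by
    have hAe : e.symm (diagonal d ⊗ₖ (1 + shift K h)) =
        diagonal fun r => d r • (1 + shift K h) := by
      ext r s i j
      by_cases hrs : r = s <;> simp [e, hrs, mul_add, mul_ite]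
    simpa [hAe] using hA.map e.symm
  have hMB : Commute M (of fun i j : Fin p => if i = j + 1 then 1 else 0) := by
    have hBe : e.symm ((of fun i j : Fin p => if i = j + 1 then (1 : K) else 0) ⊗ₖ 1) =
        of fun i j : Fin p => if i = j + 1 then 1 else 0 := by
      ext r s i j
      by_cases hrs : r = s + 1 <;> simp [e, hrs]
    simpa [hBe] using hB.map e.symm
  have hM : M = diagonal fun _ => M 0 0 := by
    ext1 r s
    by_cases hrs : r = s
    · rw [hrs, diagonal_apply_eq, apply_self_eq_of_commute hMB]
    · rw [diagonal_apply_ne _ hrs,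
        apply_eq_zero_of_commute_diagonal_smul isNilpotent_shift hMA (hd.ne hrs)]
  have hX : IsIdempotentElem (M 0 0) := by
    have h := congr_fun₂ (hE.map e.symm).eq 0 0
    rw [← hMdef, hM, diagonal_mul_diagonal] at h
    show M 0 0 * M 0 0 = M 0 0
    simpa using h
  have hEM : E = e M := (e.apply_symm_apply E).symm
  rcases eq_zero_or_eq_one_of_commute_shift hX
    (commute_apply_self_of_commute_diagonal_smul hMA (hd0 0)) with h0 | h1
  · left; rw [hEM, hM, h0, diagonal_zero, map_zero]
  · right; rw [hEM, hM, h1, diagonal_one, map_one]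

end Matrix

theorem IsPrimitiveRoot.injective_pow_succ {K : Type*} [Field K] {ω : K} {p : ℕ} [NeZero p]
    (hω : IsPrimitiveRoot ω p) : Function.Injective fun r : Fin p => ω ^ ((r : ℕ) + 1) := by
  intro r s hrs
  simp only [pow_succ] at hrs
  exact Fin.ext (hω.pow_inj r.isLt s.isLt (mul_right_cancel₀ (hω.ne_zero (NeZero.ne p)) hrs))

theorem Matrix.eq_bot_or_eq_bot_of_isCompl {K n : Type*} [CommRing K] [Fintype n]
    [DecidableEq n]
    (S : Set (Matrix n n K))
    (hS : ∀ E, (∀ M ∈ S, Commute E M) → IsIdempotentElem E → E = 0 ∨ E = 1)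
    {W₁ W₂ : Submodule K (n → K)} (hW₁ : ∀ M ∈ S, ∀ v ∈ W₁, M *ᵥ v ∈ W₁)
    (hW₂ : ∀ M ∈ S, ∀ v ∈ W₂, M *ᵥ v ∈ W₂) (hW : IsCompl W₁ W₂) :
    W₁ = ⊥ ∨ W₂ = ⊥ := by
  set f := W₁.projection W₂ hW with hf_def
  have hf : IsIdempotentElem f := Submodule.isIdempotentElem_projection hW
  have hcomm : ∀ M ∈ S, Commute f (toLinAlgEquiv' M) := fun M hM =>
    (LinearMap.IsIdempotentElem.commute_iff hf).2
      ⟨by rw [Submodule.range_projection]; exact hW₁ M hM,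
        by rw [Submodule.ker_projection]; exact hW₂ M hM⟩
  have hE := hS (LinearMap.toMatrixAlgEquiv' f)
    (fun M hM => by
      simpa only [LinearMap.toMatrixAlgEquiv'_toLinAlgEquiv'] using
        (hcomm M hM).map LinearMap.toMatrixAlgEquiv')
    (hf.map LinearMap.toMatrixAlgEquiv')
  rw [map_eq_zero_iff _ (AlgEquiv.injective _), map_eq_one_iff _ (AlgEquiv.injective _)] at hE
  rcases hE with h0 | h1
  · left
    rw [← Submodule.range_projection hW, ← hf_def, h0, LinearMap.range_zero]
  · right
    rw [← Submodule.ker_projection hW, ← hf_def, h1, Module.End.one_eq_id, LinearMap.ker_id]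

/-- Let `σ : F₂ → U(p)` be the Heisenberg representation with
`σ(a) = diag(ζ^q, …, ζ^{pq})` (`ζ = e^{2πi/p}`, `gcd(p,q) = 1`) and `σ(b)` the
cyclic permutation matrix, and let `τ : F₂ → GL(h, ℂ)` send `a` to the unipotent
Jordan block `J_h(1)` and `b` to `I`.  Then the only idempotent endomorphisms of
`ℂ^p ⊗ ℂ^h` commuting with `(σ⊗τ)(a)` and `(σ⊗τ)(b)` are `0` and `I`; hence
`σ ⊗ τ` is indecomposable. -/
theorem stmt17 (p : ℕ) [NeZero p] (h : ℕ) (hh : 1 ≤ h) (q : ℕ) (hpq : Nat.Coprime p q)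
    (ζ : ℂ) (hζ : ζ = Complex.exp (2 * Real.pi * Complex.I / p))
    (σa : Matrix (Fin p) (Fin p) ℂ)
    (hσa : σa = Matrix.diagonal fun r : Fin p => ζ ^ (q * ((r : ℕ) + 1)))
    (σb : Matrix (Fin p) (Fin p) ℂ)
    (hσb : σb = Matrix.of fun i j : Fin p => if i = j + 1 then (1 : ℂ) else 0)
    (τa : Matrix (Fin h) (Fin h) ℂ)
    (hτa : τa = Matrix.of fun i j : Fin h =>
      if j = i then (1 : ℂ) else if (j : ℕ) = (i : ℕ) + 1 then 1 else 0) :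
    (∀ E : Matrix (Fin p × Fin h) (Fin p × Fin h) ℂ,
      E * (σa ⊗ₖ τa) = (σa ⊗ₖ τa) * E →
      E * (σb ⊗ₖ (1 : Matrix (Fin h) (Fin h) ℂ)) = (σb ⊗ₖ (1 : Matrix (Fin h) (Fin h) ℂ)) * E →
      E * E = E → E = 0 ∨ E = 1) ∧
    ∀ W₁ W₂ : Submodule ℂ (Fin p × Fin h → ℂ),
      (∀ v ∈ W₁, (σa ⊗ₖ τa).mulVec v ∈ W₁) →
      (∀ v ∈ W₁, (σb ⊗ₖ (1 : Matrix (Fin h) (Fin h) ℂ)).mulVec v ∈ W₁) →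
      (∀ v ∈ W₂, (σa ⊗ₖ τa).mulVec v ∈ W₂) →
      (∀ v ∈ W₂, (σb ⊗ₖ (1 : Matrix (Fin h) (Fin h) ℂ)).mulVec v ∈ W₂) →
      IsCompl W₁ W₂ → W₁ = ⊥ ∨ W₂ = ⊥ := by
  have : NeZero h := ⟨by omega⟩
  have hω : IsPrimitiveRoot (ζ ^ q) p :=
    (hζ ▸ Complex.isPrimitiveRoot_exp p (NeZero.ne p)).pow_of_coprime q hpq.symm
  have hσ : σa = Matrix.diagonal fun r : Fin p => (ζ ^ q) ^ ((r : ℕ) + 1) := by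
    simp_rw [hσa, pow_mul]
  have hτ : τa = 1 + Matrix.shift ℂ h := by
    ext i j
    by_cases hij : i = j <;> simp [hτa, hij, eq_comm]
  have hidem : ∀ E, Commute E (σa ⊗ₖ τa) → Commute E (σb ⊗ₖ 1) → IsIdempotentElem E →
      E = 0 ∨ E = 1 := by
    rw [hσ, hσb, hτ]
    exact fun E hA hB hE => Matrix.eq_zero_or_eq_one_of_commute_kronecker hω.injective_pow_succ
      (fun r => pow_ne_zero _ (hω.ne_zero (NeZero.ne p))) hA hB hE
  refine ⟨hidem, fun W₁ W₂ h₁a h₁b h₂a h₂b hW =>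
    Matrix.eq_bot_or_eq_bot_of_isCompl {σa ⊗ₖ τa, σb ⊗ₖ 1} ?_ ?_ ?_ hW⟩
  · simpa using hidem
  · simpa using ⟨h₁a, h₁b⟩
  · simpa using ⟨h₂a, h₂b⟩
end
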